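/- Let G be a non-Abelian subgroup of Homeo₊(I) such that every non-identity element of G has finitely many fixed points in (0,1). Then G contains a crossed pair, and consequently G contains a free semigroup on two generators. -/

import Mathlib

/-!
Suppose `G` has no crossed pair and `f g ≠ g f` in `G`. Let `(c, d)` be a gap of `f`: a
component of the complement of its finite set of fixed points. An element `v ≠ 1` of `G` that
fixes a point of `(c, d)`, or moves a fixed point of `f`, would produce a crossed pair, with `f`
on the gap `(c, d)` or with `v` on one of its own gaps. Hence `G` preserves `(c, d)` and acts
freely on it. Ordering `G` by `v ↦ v x₀` for a base point `x₀ ∈ (c, d)` then makes it a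
bi-ordered archimedean group, which is abelian by Hölder's theorem: a contradiction.

Given a crossed pair, say `g a ∈ (a, b)` for a gap `(a, b)` of `f`, a high power `F` of `f⁻¹` or
`f` squeezes a neighbourhood of `g a` towards `a`, and `g` sends the result back to the right of
`g a`; by ping-pong, `g F` and `F` generate a free semigroup.
-/

noncomputable section

/-- The unit interval `[0,1] ⊆ ℝ`. -/
abbrev unitI : Set ℝ := Set.Icc (0:ℝ) 1

/-- Ambient group: bijections of the unit interval. -/
abbrev IntervalMap : Type := Equiv.Perm ↥unitI

/-- The extension of `σ` to `ℝ`, by the identity outside `[0,1]`. -/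
def toReal (σ : IntervalMap) : ℝ → ℝ :=
  fun x => if h : x ∈ unitI then (σ ⟨x, h⟩ : ℝ) else x

/-- `σ` is an orientation-preserving homeomorphism of `[0,1]` (a strictly
increasing bijection of `[0,1]`; such a map automatically fixes `0` and `1`
and is continuous). -/
def IsOPH (σ : IntervalMap) : Prop := StrictMono fun x : ↥unitI => (σ x : ℝ)

/-- `σ` extends to a `C¹` function on `[0,1]`. -/
def IsC1On (σ : IntervalMap) : Prop := ContDiffOn ℝ 1 (toReal σ) unitI

/-- `σ` is an orientation-preserving `C¹` diffeomorphism of `[0,1]`. -/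
def IsOPD (σ : IntervalMap) : Prop := IsOPH σ ∧ IsC1On σ ∧ IsC1On σ⁻¹

/-- `Γ` is a subgroup of `Diff₊(I)`. -/
def DiffSubgroup (Γ : Subgroup IntervalMap) : Prop := ∀ γ ∈ Γ, IsOPD γ

/-- `Γ` is a subgroup of `Homeo₊(I)`. -/
def HomeoSubgroup (Γ : Subgroup IntervalMap) : Prop := ∀ γ ∈ Γ, IsOPH γ

/-- The set of fixed points of `σ` in the open interval `(0,1)`. -/
def FixPts (σ : IntervalMap) : Set ↥unitI :=
  {x : ↥unitI | σ x = x ∧ 0 < (x : ℝ) ∧ (x : ℝ) < 1}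

/-- Every non-identity element of `Γ` has finitely many fixed points in `(0,1)`. -/
def FinFix (Γ : Subgroup IntervalMap) : Prop := ∀ γ ∈ Γ, γ ≠ 1 → (FixPts γ).Finite

/-- The `C⁰`-norm `‖σ‖ = sup_{x ∈ [0,1]} |σ(x) - x|`. -/
def C0norm (σ : IntervalMap) : ℝ := ⨆ x : ↥unitI, |(σ x : ℝ) - (x : ℝ)|

/-- `Γ` is locally transitive. -/
def LocTrans (Γ : Subgroup IntervalMap) : Prop :=
  ∀ p : ↥unitI, 0 < (p : ℝ) → (p : ℝ) < 1 → ∀ ε : ℝ, 0 < ε →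
    ∃ γ ∈ Γ, C0norm γ < ε ∧ γ p ≠ p

/-- `Γ` is irreducible: no global fixed point in `(0,1)`. -/
def Irred (Γ : Subgroup IntervalMap) : Prop :=
  ¬ ∃ p : ↥unitI, 0 < (p : ℝ) ∧ (p : ℝ) < 1 ∧ ∀ γ ∈ Γ, γ p = p

/-- The group `Aff₊(ℝ)` of orientation-preserving affine maps `x ↦ a x + b`,
`a > 0`, as a subgroup of the permutation group of `ℝ`. -/
def AffPlus : Subgroup (Equiv.Perm ℝ) where
  carrier := {e | ∃ a b : ℝ, 0 < a ∧ ∀ x, e x = a * x + b}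
  one_mem' := ⟨1, 0, one_pos, fun x => by simp⟩
  mul_mem' := by
    rintro e f ⟨a, b, ha, he⟩ ⟨c, d, hc, hf⟩
    refine ⟨a * c, a * d + b, mul_pos ha hc, fun x => ?_⟩
    rw [Equiv.Perm.mul_apply, hf, he]; ring
  inv_mem' := by
    rintro e ⟨a, b, ha, he⟩
    refine ⟨a⁻¹, -b / a, by positivity, fun y => ?_⟩
    apply e.injective
    rw [show e (e⁻¹ y) = y from e.apply_symm_apply y, he]
    first | (field_simp; done) | (field_simp; ring)

/-- `G` embeds into (i.e. is isomorphic to a subgroup of) `Aff₊(ℝ)`. -/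
def EmbedsInAff (G : Type*) [Group G] : Prop :=
  ∃ φ : G →* ↥AffPlus, Function.Injective φ

/-- `G` embeds into `Aff₊(ℝ)ⁿ` for some `n ≥ 1`. -/
def EmbedsInAffPow (G : Type*) [Group G] : Prop :=
  ∃ n : ℕ, 1 ≤ n ∧ ∃ φ : G →* (Fin n → ↥AffPlus), Function.Injective φ

/-- `G` has infinite girth: for every `m` there is a finite generating set `S`
such that no non-trivial reduced word of length at most `m` in `S ∪ S⁻¹`
represents the identity. -/
def HasInfiniteGirth (G : Type*) [Group G] : Prop :=
  ∀ m : ℕ, ∃ S : Finset G, Subgroup.closure (S : Set G) = ⊤ ∧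
    ∀ w : FreeGroup {x // x ∈ S}, w ≠ 1 →
      (∃ l : List ({x // x ∈ S} × Bool), l.length ≤ m ∧ FreeGroup.mk l = w) →
      FreeGroup.lift (fun s => (s : G)) w ≠ 1

/-- `a` and `b` generate a free semigroup on two generators: distinct
non-empty positive words in `a, b` give distinct elements. -/
def FreeSemigroupPair {G : Type*} [Group G] (a b : G) : Prop :=
  Function.Injective
    ⇑(FreeSemigroup.lift (fun x : Bool => if x then a else b) : FreeSemigroup Bool →ₙ* G)

/-- `g < f` in the biorder: `g(x) < f(x)` near `0`. -/
def ltNear (g f : IntervalMap) : Prop :=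
  ∃ δ : ℝ, 0 < δ ∧ ∀ x : ↥unitI, 0 < (x : ℝ) → (x : ℝ) < δ → (g x : ℝ) < (f x : ℝ)

/-- `g ≤ f` in the biorder. -/
def leNear (g f : IntervalMap) : Prop := ltNear g f ∨ g = f

/-- `g << f`: `g` is infinitesimal with respect to `f`, i.e. `gⁿ < f` for all `n ∈ ℤ`. -/
def Infinitesimal (g f : IntervalMap) : Prop := ∀ n : ℤ, ltNear (g ^ n) f

/-- `(f, g)` is a crossed pair on the interval `(a,b)`: `f` fixes `a` and `b`
but no point strictly between them, while `g` maps `a` or `b` into `(a,b)`. -/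
def CrossedOn (f g : IntervalMap) (a b : ↥unitI) : Prop :=
  f a = a ∧ f b = b ∧ (∀ x : ↥unitI, (a : ℝ) < x → (x : ℝ) < b → f x ≠ x) ∧
  (((a : ℝ) < (g a : ℝ) ∧ (g a : ℝ) < b) ∨ ((a : ℝ) < (g b : ℝ) ∧ (g b : ℝ) < b))

/-- `(f, g)` is a crossed pair. -/
def CrossedPair (f g : IntervalMap) : Prop :=
  ∃ a b : ↥unitI, (a : ℝ) < b ∧ (CrossedOn f g a b ∨ CrossedOn g f a b)

/-- The auxiliary point configuration used in weak transitivity: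
`extPt γ p 0 = 0`, `extPt γ p j = γ(pⱼ)` for `1 ≤ j ≤ k` (here `pⱼ = p ⟨j-1⟩`
in `0`-indexed notation), and `extPt γ p (k+1) = 1`. -/
def extPt (γ : IntervalMap) {k : ℕ} (p : Fin k → ↥unitI) (j : ℕ) : ℝ :=
  if j = 0 then 0 else if h : j - 1 < k then (γ (p ⟨j - 1, h⟩) : ℝ) else 1

/-- `Γ` is weakly `k`-transitive. -/
def WeaklyKTrans (Γ : Subgroup IntervalMap) (k : ℕ) : Prop :=
  ∀ g ∈ Γ, ∀ p : Fin k → ↥unitI,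
    (∀ i, 0 < (p i : ℝ) ∧ (p i : ℝ) < 1) →
    (StrictMono fun i => (p i : ℝ)) →
    ∀ ε : ℝ, 0 < ε →
      ∃ γ ∈ Γ, extPt γ p k < ε ∧
        ∀ i : Fin k,
          extPt γ p i.val < (g (γ (p i)) : ℝ) ∧
            (g (γ (p i)) : ℝ) < extPt γ p (i.val + 2)

/-- `Γ` is weakly transitive. -/
def WeakTrans (Γ : Subgroup IntervalMap) : Prop := ∀ k : ℕ, 1 ≤ k → WeaklyKTrans Γ k

open Set Function
open scoped commutatorElement

lemma exists_pow_le_lt_pow_succ {M : Type*} [Monoid M] [LinearOrder M] {δ a : M} (ha : 1 ≤ a)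
    (harch : ∃ n : ℕ, a < δ ^ n) : ∃ m : ℕ, δ ^ m ≤ a ∧ a < δ ^ (m + 1) := by
  classical
  have hfind : Nat.find harch ≠ 0 := fun h => by
    simpa [h] using (Nat.find_spec harch).trans_le' ha
  obtain ⟨m, hm⟩ := Nat.exists_eq_succ_of_ne_zero hfind
  refine ⟨m, not_lt.1 (Nat.find_min harch (hm ▸ m.lt_succ_self)), ?_⟩
  simpa [hm] using Nat.find_spec harch

section Holder

variable {H : Type*} [Group H] [LinearOrder H]

lemma commute_of_forall_one_lt [MulLeftMono H] (h : ∀ a b : H, 1 < a → 1 < b → Commute a b)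
    (a b : H) : Commute a b := by
  have key : ∀ a b : H, 1 < a → Commute a b := fun a b ha => by
    rcases lt_trichotomy b 1 with hb | rfl | hb
    · exact Commute.inv_right_iff.1 (h a b⁻¹ ha (Left.one_lt_inv_iff.2 hb))
    · exact Commute.one_right a
    · exact h a b ha hb
  rcases lt_trichotomy a 1 with ha | rfl | ha
  · exact Commute.inv_left_iff.1 (key a⁻¹ b (Left.one_lt_inv_iff.2 ha))
  · exact Commute.one_left b
  · exact key a b ha

lemma eq_pow_of_isLeast_one_lt [MulLeftMono H] (harch : ∀ a b : H, 1 < a → ∃ n : ℕ, b < a ^ n)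
    {s a : H} (hs : IsLeast {t | 1 < t} s) (ha : 1 < a) : ∃ m : ℕ, a = s ^ m := by
  obtain ⟨m, hle, hlt⟩ := exists_pow_le_lt_pow_succ ha.le (harch s a hs.1)
  refine ⟨m, (eq_of_le_of_not_lt hle fun hlt' => ?_).symm⟩
  have hpos : 1 < (s ^ m)⁻¹ * a := by rwa [lt_inv_mul_iff_mul_lt, mul_one]
  have hsmall : (s ^ m)⁻¹ * a < s := by rwa [inv_mul_lt_iff_lt_mul, ← pow_succ]
  exact hsmall.not_ge (hs.2 hpos)

lemma exists_one_lt_sq_le [MulLeftMono H] [MulRightMono H] {γ ε : H} (hε : 1 < ε)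
    (hεγ : ε < γ) : ∃ δ : H, 1 < δ ∧ δ ^ 2 ≤ γ := by
  rcases le_total ε (ε⁻¹ * γ) with h | h
  · exact ⟨ε, hε, by simpa [sq] using mul_le_mul_right h ε⟩
  · refine ⟨ε⁻¹ * γ, by rwa [lt_inv_mul_iff_mul_lt, mul_one], ?_⟩
    simpa [sq] using mul_le_mul_left h (ε⁻¹ * γ)

theorem not_one_lt_commutatorElement [MulLeftMono H] [MulRightMono H]
    (harch : ∀ a b : H, 1 < a → ∃ n : ℕ, b < a ^ n) {a b : H} (ha : 1 < a) (hb : 1 < b) :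
    ¬ 1 < ⁅a, b⁆ := by
  intro hγ
  by_cases hmin : ∃ s, IsLeast {t : H | 1 < t} s
  · obtain ⟨s, hs⟩ := hmin
    obtain ⟨m, rfl⟩ := eq_pow_of_isLeast_one_lt harch hs ha
    obtain ⟨n, rfl⟩ := eq_pow_of_isLeast_one_lt harch hs hb
    rw [commutatorElement_eq_one_iff_commute.2 (Commute.pow_pow_self s m n)] at hγ
    exact hγ.false
  · obtain ⟨ε, hε, hεγ⟩ : ∃ ε, 1 < ε ∧ ε < ⁅a, b⁆ := by
      by_contra! h
      exact hmin ⟨_, hγ, fun t ht => h t ht⟩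
    obtain ⟨δ, hδ, hδγ⟩ := exists_one_lt_sq_le hε hεγ
    obtain ⟨m, ham, ham'⟩ := exists_pow_le_lt_pow_succ ha.le (harch δ a hδ)
    obtain ⟨n, hbn, hbn'⟩ := exists_pow_le_lt_pow_succ hb.le (harch δ b hδ)
    refine hδγ.not_gt ?_
    calc ⁅a, b⁆ = a * b * a⁻¹ * b⁻¹ := commutatorElement_def a b
      _ < δ ^ (m + 1) * δ ^ (n + 1) * (δ ^ m)⁻¹ * (δ ^ n)⁻¹ :=
          mul_lt_mul_of_lt_of_le
            (mul_lt_mul_of_lt_of_le (mul_lt_mul_of_lt_of_lt ham' hbn') (inv_le_inv_iff.2 ham))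
            (inv_le_inv_iff.2 hbn)
      _ = δ ^ 2 := by group

theorem commute_of_archimedean [MulLeftMono H] [MulRightMono H]
    (harch : ∀ a b : H, 1 < a → ∃ n : ℕ, b < a ^ n) (a b : H) : Commute a b := by
  refine commute_of_forall_one_lt (fun a b ha hb => ?_) a b
  rcases lt_trichotomy ⁅a, b⁆ 1 with h | h | h
  · refine absurd ?_ (not_one_lt_commutatorElement harch hb ha)
    rwa [← commutatorElement_inv, Left.one_lt_inv_iff]
  · exact commutatorElement_eq_one_iff_commute.1 h
  · exact absurd h (not_one_lt_commutatorElement harch ha hb)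

end Holder

lemma FreeSemigroup.lift_mk_eq_prod {α M : Type*} [Monoid M] (f : α → M) (x : α) (l : List α) :
    FreeSemigroup.lift f ⟨x, l⟩ = ((x :: l).map f).prod := by
  induction l generalizing x with
  | nil => simp [FreeSemigroup.lift_mk_eq_foldl]
  | cons y l ih =>
    rw [show (⟨x, y :: l⟩ : FreeSemigroup α) = FreeSemigroup.of x * ⟨y, l⟩ from rfl,
      FreeSemigroup.lift_of_mul, ih]
    simp

section PingPong

variable {H X : Type*} [Group H] [MulAction H X]

lemma injective_prod_map_of_mapsTo {ι : Type*} (e : ι → H) {T : Set X} (S : ι → Set X)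
    (hS : Pairwise (Disjoint on S)) (hST : ∀ i, S i ⊆ T) {p : X} (hpT : p ∈ T)
    (hpS : ∀ i, p ∉ S i) (he : ∀ i, MapsTo (e i • ·) T (S i)) :
    Injective fun l : List ι => (l.map e).prod := by
  have hmemT : ∀ l : List ι, (l.map e).prod • p ∈ T := by
    intro l
    induction l with
    | nil => simpa using hpT
    | cons i l ih => simpa [mul_smul] using hST i (he i ih)
  have hmemS : ∀ i l, ((i :: l).map e).prod • p ∈ S i := fun i l => by
    simpa [mul_smul] using he i (hmemT l)
  intro l₁
  induction l₁ with
  | nil =>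
    rintro (_ | ⟨j, l₂⟩) h <;> dsimp only at h
    · rfl
    · have := hmemS j l₂
      rw [← h] at this
      exact absurd (by simpa using this) (hpS j)
  | cons i l₁ ih =>
    rintro (_ | ⟨j, l₂⟩) h <;> dsimp only at h
    · have := hmemS i l₁
      rw [h] at this
      exact absurd (by simpa using this) (hpS i)
    · obtain rfl : i = j := by
        by_contra hij
        have := hmemS j l₂
        rw [← h] at this
        exact Set.disjoint_left.1 (hS hij) (hmemS i l₁) this
      simp only [List.map_cons, List.prod_cons, mul_right_inj] at h
      rw [ih h]

lemma freeSemigroupPair_of_injective {a b : H}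
    (h : Injective fun l : List Bool => (l.map fun x => if x then a else b).prod) :
    FreeSemigroupPair a b := by
  rintro ⟨x, l⟩ ⟨y, l'⟩ hxy
  rw [FreeSemigroup.lift_mk_eq_prod, FreeSemigroup.lift_mk_eq_prod] at hxy
  cases h hxy
  rfl

lemma freeSemigroupPair_of_mapsTo {a b : H} {T U V : Set X} (hUV : Disjoint U V) (hUT : U ⊆ T)
    (hVT : V ⊆ T) {p : X} (hpT : p ∈ T) (hpU : p ∉ U) (hpV : p ∉ V)
    (ha : MapsTo (a • ·) T U) (hb : MapsTo (b • ·) T V) : FreeSemigroupPair a b :=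
  freeSemigroupPair_of_injective <| injective_prod_map_of_mapsTo _ (fun x => if x then U else V)
    (by simpa [← cond_eq_ite] using pairwise_disjoint_on_bool.2 hUV)
    (Bool.rec (by simpa using hVT) (by simpa using hUT)) hpT
    (Bool.rec (by simpa using hpV) (by simpa using hpU))
    (Bool.rec (by simpa using hb) (by simpa using ha))

end PingPong

section LinearOrder

variable {α : Type*} [LinearOrder α]

lemma Equiv.Perm.strictMono_inv {σ : Equiv.Perm α} (hσ : StrictMono σ) : StrictMono ⇑σ⁻¹ :=
  fun x y h => hσ.lt_iff_lt.1 (by simpa using h)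

structure IsGap (σ : Equiv.Perm α) (a b : α) : Prop where
  lt : a < b
  apply_left : σ a = a
  apply_right : σ b = b
  apply_ne : ∀ x ∈ Ioo a b, σ x ≠ x

lemma IsGap.inv {σ : Equiv.Perm α} {a b : α} (h : IsGap σ a b) : IsGap σ⁻¹ a b :=
  ⟨h.lt, Equiv.Perm.inv_eq_iff_eq.2 h.apply_left.symm,
    Equiv.Perm.inv_eq_iff_eq.2 h.apply_right.symm,
    fun x hx hσx => h.apply_ne x hx (Equiv.Perm.inv_eq_iff_eq.1 hσx).symm⟩

/-- `CrossedPair` for permutations of an arbitrary linear order, `f` being the one with a gap. -/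
def IsCrossed (f g : Equiv.Perm α) : Prop :=
  ∃ a b, IsGap f a b ∧ (g a ∈ Ioo a b ∨ g b ∈ Ioo a b)

lemma exists_isGap_of_apply_eq {σ : Equiv.Perm α} (hfin : (fixedPoints σ).Finite) {c e : α}
    (hc : σ c = c) (he : σ e = e) (hce : c < e) : ∃ d ≤ e, IsGap σ c d := by
  obtain ⟨d, ⟨hd, hcd⟩, hmin⟩ := exists_min_image {x | x ∈ fixedPoints σ ∧ c < x} id
    (hfin.subset fun x hx => hx.1) ⟨e, he, hce⟩
  exact ⟨d, hmin e ⟨he, hce⟩, hcd, hc, hd, fun x hx hσx => (hmin x ⟨hσx, hx.1⟩).not_gt hx.2⟩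

lemma exists_isGap_mem_Ioo [BoundedOrder α] {σ : Equiv.Perm α} (hσ : Monotone σ)
    (hfin : (fixedPoints σ).Finite) {q : α} (hq : σ q ≠ q) :
    ∃ c d, IsGap σ c d ∧ q ∈ Ioo c d := by
  have hbot : σ ⊥ = ⊥ := le_bot_iff.1 (by simpa using hσ (bot_le (a := σ⁻¹ ⊥)))
  have htop : σ ⊤ = ⊤ := top_le_iff.1 (by simpa using hσ (le_top (a := σ⁻¹ ⊤)))
  obtain ⟨c, ⟨hc, hcq⟩, hmax⟩ := exists_max_image {x | x ∈ fixedPoints σ ∧ x < q} id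
    (hfin.subset fun x hx => hx.1) ⟨⊥, hbot, bot_lt_iff_ne_bot.2 fun h => hq (h ▸ hbot)⟩
  obtain ⟨d, -, hgap⟩ := exists_isGap_of_apply_eq hfin hc htop (hcq.trans_le le_top)
  refine ⟨c, d, hgap, hcq, lt_of_not_ge fun hdq => ?_⟩
  rcases hdq.lt_or_eq with hdq | rfl
  · exact (hmax d ⟨hgap.apply_right, hdq⟩).not_gt hgap.lt
  · exact hq hgap.apply_right

variable {G : Subgroup (Equiv.Perm α)}

lemma exists_mem_apply_mem_Ioo_of_lt (hmono : ∀ g ∈ G, StrictMono g) {σ : Equiv.Perm α}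
    (hσ : σ ∈ G) {x e : α} (he : σ e = e) (hxe : x < e) (hx : σ x ≠ x) :
    ∃ τ ∈ G, τ x ∈ Ioo x e := by
  rcases hx.lt_or_gt with h | h
  · have he' : σ⁻¹ e = e := Equiv.Perm.inv_eq_iff_eq.2 he.symm
    refine ⟨σ⁻¹, G.inv_mem hσ, ?_, he' ▸ hmono _ (G.inv_mem hσ) hxe⟩
    simpa using hmono _ (G.inv_mem hσ) h
  · exact ⟨σ, hσ, h, he ▸ hmono σ hσ hxe⟩

lemma exists_mem_apply_mem_Ioo_of_gt (hmono : ∀ g ∈ G, StrictMono g) {σ : Equiv.Perm α}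
    (hσ : σ ∈ G) {x e : α} (he : σ e = e) (hex : e < x) (hx : σ x ≠ x) :
    ∃ τ ∈ G, τ x ∈ Ioo e x := by
  rcases hx.lt_or_gt with h | h
  · exact ⟨σ, hσ, he ▸ hmono σ hσ hex, h⟩
  · have he' : σ⁻¹ e = e := Equiv.Perm.inv_eq_iff_eq.2 he.symm
    refine ⟨σ⁻¹, G.inv_mem hσ, he' ▸ hmono _ (G.inv_mem hσ) hex, ?_⟩
    simpa using hmono _ (G.inv_mem hσ) h

lemma exists_isCrossed_of_isGap_of_apply_eq (hmono : ∀ g ∈ G, StrictMono g)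
    {f h : Equiv.Perm α} (hf : f ∈ G) (hh : h ∈ G) {c d e : α} (hgap : IsGap f c d)
    (hfin : (fixedPoints h).Finite) (he : e ∈ Ioo c d) (hhe : h e = e) :
    ∃ u ∈ G, ∃ v ∈ G, IsCrossed u v := by
  by_cases hc : h c = c
  · by_cases hd : h d = d
    · obtain ⟨d', hd'e, hgap'⟩ := exists_isGap_of_apply_eq hfin hc hhe he.1
      obtain ⟨τ, hτ, hτd'⟩ := exists_mem_apply_mem_Ioo_of_gt hmono hf hgap.apply_left hgap'.lt
        (hgap.apply_ne d' ⟨hgap'.lt, hd'e.trans_lt he.2⟩)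
      exact ⟨h, hh, τ, hτ, c, d', hgap', Or.inr hτd'⟩
    · obtain ⟨τ, hτ, hτd⟩ := exists_mem_apply_mem_Ioo_of_gt hmono hh hhe he.2 hd
      exact ⟨f, hf, τ, hτ, c, d, hgap, Or.inr ⟨he.1.trans hτd.1, hτd.2⟩⟩
  · obtain ⟨τ, hτ, hτc⟩ := exists_mem_apply_mem_Ioo_of_lt hmono hh hhe he.1 hc
    exact ⟨f, hf, τ, hτ, c, d, hgap, Or.inl ⟨hτc.1, hτc.2.trans he.2⟩⟩

end LinearOrder

section ConditionallyComplete

variable {α : Type*} [ConditionallyCompleteLinearOrder α]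

lemma exists_apply_eq_mem_Icc {σ : α → α} (hσ : Monotone σ) {x y : α} (hxy : x ≤ y)
    (hx : x ≤ σ x) (hy : σ y ≤ y) : ∃ z ∈ Icc x y, σ z = z := by
  set S := {t ∈ Icc x y | t ≤ σ t}
  have hS : S.Nonempty := ⟨x, ⟨le_rfl, hxy⟩, hx⟩
  have hbdd : BddAbove S := ⟨y, fun t ht => ht.1.2⟩
  have hxs : x ≤ sSup S := le_csSup hbdd ⟨⟨le_rfl, hxy⟩, hx⟩
  have hsy : sSup S ≤ y := csSup_le hS fun t ht => ht.1.2
  have hle : sSup S ≤ σ (sSup S) := csSup_le hS fun t ht => ht.2.trans (hσ (le_csSup hbdd ht))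
  have hge : σ (sSup S) ≤ sSup S :=
    le_csSup hbdd ⟨⟨hxs.trans hle, (hσ hsy).trans hy⟩, hσ hle⟩
  exact ⟨sSup S, ⟨hxs, hsy⟩, hge.antisymm hle⟩

lemma lt_apply_of_lt_apply {σ : Equiv.Perm α} (hσ : StrictMono σ) {J : Set α} [J.OrdConnected]
    (hJ : ∀ x ∈ J, σ x ≠ x) {x y : α} (hx : x ∈ J) (hy : y ∈ J) (hxσ : x < σ x) : y < σ y := by
  refine lt_of_le_of_ne (not_lt.1 fun hyσ => ?_) (hJ y hy).symm
  rcases le_total x y with hxy | hyx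
  · obtain ⟨z, hz, hσz⟩ := exists_apply_eq_mem_Icc hσ.monotone hxy hxσ.le hyσ.le
    exact hJ z (Set.Icc_subset J hx hy hz) hσz
  · have hσ' := (Equiv.Perm.strictMono_inv hσ).monotone
    obtain ⟨z, hz, hσz⟩ := exists_apply_eq_mem_Icc hσ' hyx
      (by simpa using hσ' hyσ.le) (by simpa using hσ' hxσ.le)
    exact hJ z (Set.Icc_subset J hy hx hz) (Equiv.Perm.inv_eq_iff_eq.1 hσz).symm

lemma exists_lt_pow_apply {σ : Equiv.Perm α} (hσ : StrictMono σ) {J : Set α} [J.OrdConnected]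
    (hJ : ∀ x ∈ J, x < σ x) {x t : α} (hx : x ∈ J) (ht : t ∈ J) : ∃ n : ℕ, t < (σ ^ n) x := by
  by_contra! h
  set S := range fun n : ℕ => (σ ^ n) x
  have hbdd : BddAbove S := ⟨t, forall_mem_range.2 h⟩
  have hxs : x ≤ sSup S := le_csSup hbdd ⟨0, rfl⟩
  have hst : sSup S ≤ t := csSup_le (range_nonempty _) (forall_mem_range.2 h)
  have hs : σ⁻¹ (sSup S) < sSup S := by
    simpa using Equiv.Perm.strictMono_inv hσ (hJ _ (Set.Icc_subset J hx ht ⟨hxs, hst⟩))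
  obtain ⟨_, ⟨n, rfl⟩, hn⟩ := exists_lt_of_lt_csSup (range_nonempty _) hs
  refine (le_csSup hbdd ⟨n + 1, rfl⟩).not_gt ?_
  simpa [pow_succ'] using hσ hn

theorem mul_comm_of_forall_apply_ne {G : Subgroup (Equiv.Perm α)}
    (hmono : ∀ g ∈ G, StrictMono g) {J : Set α} [J.OrdConnected] (hJne : J.Nonempty)
    (hJ : ∀ g ∈ G, MapsTo g J J) (hfree : ∀ g ∈ G, g ≠ 1 → ∀ x ∈ J, g x ≠ x) :
    ∀ a ∈ G, ∀ b ∈ G, a * b = b * a := by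
  obtain ⟨x₀, hx₀⟩ := hJne
  have hpos : ∀ g ∈ G, x₀ < g x₀ → ∀ y ∈ J, y < g y := fun g hg hg₀ y hy =>
    lt_apply_of_lt_apply (hmono g hg) (hfree g hg (by rintro rfl; exact hg₀.ne rfl)) hx₀ hy hg₀
  have hlt : ∀ b ∈ G, ∀ c ∈ G, b x₀ < c x₀ → ∀ y ∈ J, b y < c y := by
    intro b hb c hc hbc y hy
    have hbinv := hmono _ (G.inv_mem hb)
    have := hpos _ (G.mul_mem (G.inv_mem hb) hc) (by simpa using hbinv hbc) y hy
    simpa using hmono b hb this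
  -- `hlt` makes this order right invariant, and `exists_lt_pow_apply` makes it archimedean.
  let _ : LinearOrder G := LinearOrder.lift' (fun g : G => (g : Equiv.Perm α) x₀) fun g h hgh => by
    have : (h : Equiv.Perm α)⁻¹ * g = 1 := by
      by_contra hne
      exact hfree _ (G.mul_mem (G.inv_mem h.2) g.2) hne x₀ hx₀
        (by simp only at hgh; simp [hgh])
    exact Subtype.ext (inv_mul_eq_one.1 this).symm
  have : MulLeftMono G := ⟨fun a b c hbc => (hmono a a.2).monotone hbc⟩
  have : MulRightMono G := ⟨fun a b c hbc => by
    rcases hbc.lt_or_eq with hbc | rfl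
    · exact (hlt b b.2 c c.2 hbc _ (hJ a a.2 hx₀)).le
    · exact le_rfl⟩
  have harch : ∀ a b : G, 1 < a → ∃ n : ℕ, b < a ^ n := fun a b ha =>
    exists_lt_pow_apply (hmono a a.2) (hpos a a.2 ha) hx₀ (hJ b b.2 hx₀)
  intro a ha b hb
  exact congrArg Subtype.val (commute_of_archimedean harch ⟨a, ha⟩ ⟨b, hb⟩).eq

end ConditionallyComplete

theorem exists_isCrossed {α : Type*} [CompleteLinearOrder α] {G : Subgroup (Equiv.Perm α)}
    (hmono : ∀ g ∈ G, StrictMono g) (hfin : ∀ g ∈ G, g ≠ 1 → (fixedPoints g).Finite)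
    (hnc : ¬ ∀ a ∈ G, ∀ b ∈ G, a * b = b * a) : ∃ f ∈ G, ∃ g ∈ G, IsCrossed f g := by
  by_contra hno
  obtain ⟨f, hf, g, hg, hfg⟩ : ∃ f ∈ G, ∃ g ∈ G, f * g ≠ g * f := by simpa using hnc
  have hf1 : f ≠ 1 := by rintro rfl; simp at hfg
  obtain ⟨q, hq⟩ : ∃ q, f q ≠ q := by
    by_contra! h
    exact hf1 (Equiv.ext h)
  obtain ⟨c, d, hgap, hqcd⟩ := exists_isGap_mem_Ioo (hmono f hf).monotone (hfin f hf hf1) hq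
  have hfix : ∀ v ∈ G, ∀ x, f x = x → v x = x := fun v hv x hx => by
    by_contra hvx
    have hv1 : v ≠ 1 := by rintro rfl; exact hvx rfl
    obtain ⟨c', d', hgap', hx'⟩ := exists_isGap_mem_Ioo (hmono v hv).monotone (hfin v hv hv1) hvx
    exact hno (exists_isCrossed_of_isGap_of_apply_eq hmono hv hf hgap' (hfin f hf hf1) hx' hx)
  have hmaps : ∀ v ∈ G, MapsTo v (Ioo c d) (Ioo c d) := fun v hv x hx =>
    ⟨hfix v hv c hgap.apply_left ▸ hmono v hv hx.1, hfix v hv d hgap.apply_right ▸ hmono v hv hx.2⟩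
  have hfree : ∀ v ∈ G, v ≠ 1 → ∀ x ∈ Ioo c d, v x ≠ x := fun v hv hv1 x hx hvx =>
    hno (exists_isCrossed_of_isGap_of_apply_eq hmono hf hv hgap (hfin v hv hv1) hx hvx)
  exact hfg (mul_comm_of_forall_apply_ne hmono ⟨q, hqcd⟩ hmaps hfree f hf g hg)

section FreeSemigroup

variable {α : Type*} [ConditionallyCompleteLinearOrder α] [DenselyOrdered α]

lemma exists_freeSemigroupPair_of_apply_left_mem_Ioo {f g : Equiv.Perm α} (hf : StrictMono f)
    (hg : StrictMono g) {a b : α} (hfa : f a = a) (hfab : ∀ x ∈ Ioo a b, x < f x)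
    (hga : g a ∈ Ioo a b) : ∃ n : ℕ, FreeSemigroupPair (g * (f ^ n)⁻¹) (f ^ n)⁻¹ := by
  obtain ⟨c, hgac, hcb⟩ := exists_between hga.2
  obtain ⟨q, hqa, hgq, hqga⟩ : ∃ q, a < q ∧ g q ≤ c ∧ q ≤ g a :=
    ⟨min (g⁻¹ c) (g a), lt_min (by simpa using Equiv.Perm.strictMono_inv hg hgac) hga.1,
      by simpa using hg.monotone (min_le_left (g⁻¹ c) (g a)), min_le_right _ _⟩
  have hq : q ∈ Ioo a b := ⟨hqa, hqga.trans_lt hga.2⟩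
  obtain ⟨n, hn⟩ := exists_lt_pow_apply hf hfab hq ⟨hga.1.trans hgac, hcb⟩
  have hfn : StrictMono ⇑(f ^ n)⁻¹ := by
    rw [← inv_pow, Equiv.Perm.coe_pow]
    exact (Equiv.Perm.strictMono_inv hf).iterate n
  have hfna : (f ^ n)⁻¹ a = a :=
    Equiv.Perm.inv_eq_iff_eq.2 (by rw [Equiv.Perm.coe_pow, Function.iterate_fixed hfa])
  have hV : MapsTo ((f ^ n)⁻¹ • ·) (Ioo a c) (Ioo a q) := fun x hx =>
    ⟨hfna ▸ hfn hx.1, (hfn hx.2).trans (by simpa using hfn hn)⟩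
  -- Ping-pong on `Ioo a c`: `(f ^ n)⁻¹` maps it into `Ioo a q`, which `g` maps into `Ioo (g a) c`.
  refine ⟨n, freeSemigroupPair_of_mapsTo
    (disjoint_left.2 fun x hx hx' => lt_asymm hx.1 (hx'.2.trans_le hqga))
    (Ioo_subset_Ioo_left hga.1.le) (Ioo_subset_Ioo_right (hqga.trans hgac.le)) ⟨hga.1, hgac⟩
    (by simp) (fun h => lt_irrefl _ (h.2.trans_le hqga))
    (fun x hx => ⟨hg (hV hx).1, (hg (hV hx).2).trans_le hgq⟩) hV⟩

lemma exists_freeSemigroupPair_of_apply_right_mem_Ioo {f g : Equiv.Perm α} (hf : StrictMono f)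
    (hg : StrictMono g) {a b : α} (hfb : f b = b) (hfab : ∀ x ∈ Ioo a b, f x < x)
    (hgb : g b ∈ Ioo a b) : ∃ n : ℕ, FreeSemigroupPair (g * (f ^ n)⁻¹) (f ^ n)⁻¹ :=
  exists_freeSemigroupPair_of_apply_left_mem_Ioo (α := αᵒᵈ) (f := f) (g := g)
    (strictMono_dual_iff.2 hf) (strictMono_dual_iff.2 hg) (a := OrderDual.toDual b)
    (b := OrderDual.toDual a) hfb (fun x hx => hfab x ⟨hx.2, hx.1⟩) ⟨hgb.2, hgb.1⟩

lemma IsGap.lt_apply_or_apply_lt {σ : Equiv.Perm α} (hσ : StrictMono σ) {a b : α}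
    (h : IsGap σ a b) : (∀ x ∈ Ioo a b, x < σ x) ∨ ∀ x ∈ Ioo a b, σ x < x := by
  obtain ⟨x₀, hx₀⟩ := exists_between h.lt
  rcases (h.apply_ne x₀ hx₀).lt_or_gt with hlt | hgt
  · have hσ' := Equiv.Perm.strictMono_inv hσ
    refine Or.inr fun y hy => ?_
    have := lt_apply_of_lt_apply hσ' h.inv.apply_ne hx₀ hy (by simpa using hσ' hlt)
    simpa using hσ this
  · exact Or.inl fun y hy => lt_apply_of_lt_apply hσ h.apply_ne hx₀ hy hgt

theorem exists_freeSemigroupPair_of_isCrossed {G : Subgroup (Equiv.Perm α)}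
    (hmono : ∀ g ∈ G, StrictMono g) {f g : Equiv.Perm α} (hf : f ∈ G) (hg : g ∈ G)
    (h : IsCrossed f g) : ∃ u ∈ G, ∃ v ∈ G, FreeSemigroupPair u v := by
  obtain ⟨a, b, hgap, hgab⟩ := h
  obtain ⟨F, hF, hFgap, hFab⟩ : ∃ F ∈ G, IsGap F a b ∧ ∀ x ∈ Ioo a b, x < F x := by
    rcases hgap.lt_apply_or_apply_lt (hmono f hf) with hinc | hdec
    · exact ⟨f, hf, hgap, hinc⟩
    · refine ⟨f⁻¹, G.inv_mem hf, hgap.inv, fun x hx => ?_⟩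
      simpa using Equiv.Perm.strictMono_inv (hmono f hf) (hdec x hx)
  have hpair : ∀ F ∈ G, (∃ n : ℕ, FreeSemigroupPair (g * (F ^ n)⁻¹) (F ^ n)⁻¹) →
      ∃ u ∈ G, ∃ v ∈ G, FreeSemigroupPair u v := fun F hF ⟨n, hn⟩ =>
    ⟨_, G.mul_mem hg (G.inv_mem (G.pow_mem hF n)), _, G.inv_mem (G.pow_mem hF n), hn⟩
  rcases hgab with hga | hgb
  · exact hpair F hF (exists_freeSemigroupPair_of_apply_left_mem_Ioo (hmono F hF) (hmono g hg)
      hFgap.apply_left hFab hga)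
  · refine hpair F⁻¹ (G.inv_mem hF) (exists_freeSemigroupPair_of_apply_right_mem_Ioo
      (hmono _ (G.inv_mem hF)) (hmono g hg) hFgap.inv.apply_right (fun x hx => ?_) hgb)
    simpa using Equiv.Perm.strictMono_inv (hmono F hF) (hFab x hx)

end FreeSemigroup

lemma finite_fixedPoints_of_finite_fixPts {σ : IntervalMap} (h : (FixPts σ).Finite) :
    (fixedPoints σ).Finite :=
  ((h.insert ⊥).insert ⊤).subset fun x hx => by
    rcases eq_or_ne x ⊤ with rfl | h1
    · exact mem_insert _ _
    rcases eq_or_ne x ⊥ with rfl | h0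
    · exact mem_insert_of_mem _ (mem_insert _ _)
    exact mem_insert_of_mem _ (mem_insert_of_mem _
      ⟨hx, bot_lt_iff_ne_bot.2 h0, lt_top_iff_ne_top.2 h1⟩)

lemma IsCrossed.crossedPair {f g : IntervalMap} (h : IsCrossed f g) : CrossedPair f g :=
  let ⟨a, b, hgap, hg⟩ := h
  ⟨a, b, hgap.lt, Or.inl
    ⟨hgap.apply_left, hgap.apply_right, fun x h1 h2 => hgap.apply_ne x ⟨h1, h2⟩, hg⟩⟩

theorem stmt13 (G : Subgroup IntervalMap) (hGhomeo : HomeoSubgroup G)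
    (hGfix : FinFix G) (hGnab : ¬ ∀ a ∈ G, ∀ b ∈ G, a * b = b * a) :
    (∃ f ∈ G, ∃ g ∈ G, CrossedPair f g) ∧
      ∃ a ∈ G, ∃ b ∈ G, FreeSemigroupPair a b := by
  have hmono : ∀ g ∈ G, StrictMono g := hGhomeo
  obtain ⟨f, hf, g, hg, hfg⟩ := exists_isCrossed hmono
    (fun g hg hg1 => finite_fixedPoints_of_finite_fixPts (hGfix g hg hg1)) hGnab
  exact ⟨⟨f, hf, g, hg, hfg.crossedPair⟩, exists_freeSemigroupPair_of_isCrossed hmono hf hg hfg⟩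

end
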